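/- Let Ṽ(a,n) be the clairvoyant value of the Chow–Robbins game from position (a,n). Then for every position (a,n) with 2a ≠ n, Ṽ(a,n) ≤ max(a/n, 1/2) + 1/(2·|2a − n|). -/

import Mathlib

open MeasureTheory ProbabilityTheory Real

/-- `X` is an i.i.d. sequence of fair coin flips taking values in `{0,1}`,
with probability `1/2` of heads (`= 1`). -/
def IsFairCoinSeq {Ω : Type*} [MeasurableSpace Ω] (μ : Measure Ω) (X : ℕ → Ω → ℝ) : Prop :=
  (∀ i, Measurable (X i)) ∧
  (∀ i ω, X i ω = 0 ∨ X i ω = 1) ∧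
  (∀ i, μ {ω | X i ω = 1} = 1/2) ∧
  iIndepFun X μ

/-- `headsProp X a n k ω` is the proportion of heads `R_k` after `k` further flips,
starting from position `(a,n)`: `a` heads out of `n` flips. -/
noncomputable def headsProp {Ω : Type*} (X : ℕ → Ω → ℝ) (a n k : ℕ) (ω : Ω) : ℝ :=
  ((a : ℝ) + ∑ i ∈ Finset.range k, X i ω) / ((n : ℝ) + k)

/-- The clairvoyant value `Ṽ(a,n) = E[sup_k R_k]`. -/
noncomputable def clairvoyantValue {Ω : Type*} [MeasurableSpace Ω] (μ : Measure Ω)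
    (X : ℕ → Ω → ℝ) (a n : ℕ) : ℝ :=
  ∫ ω, (⨆ k : ℕ, headsProp X a n k ω) ∂μ

/-!
Fix `r > 1/2` and put `t = 8 (r - 1/2)`, `c = 2 / (1 + e^t)`. The weights `c e^{t X_i}` are
independent with mean one, so their partial products form a nonnegative martingale, and Ville's
inequality (Doob's maximal inequality with the horizon sent to infinity) bounds the probability
that the product ever reaches `e^{t (r n - a)}` by `e^{-t (r n - a)}`. Hoeffding's bound
`cosh (t/2) ≤ e^{t²/8}` gives `c e^{t r} ≥ 1`, so the product does reach that level as soon as the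
proportion of heads exceeds `r`. Hence `P(sup_k R_k > r) ≤ e^{-8 (r - 1/2)(r n - a)}`, which for
`r = max (a/n) (1/2) + s` is at most `e^{-4 |2a - n| s}`; integrating this tail over `s > 0`
(layer cake) gives `E[sup_k R_k] ≤ max (a/n) (1/2) + 1 / (4 |2a - n|)`.
-/

open scoped NNReal ENNReal

namespace MeasureTheory

section Past

variable {Ω β : Type*} {mΩ : MeasurableSpace Ω} [mβ : MeasurableSpace β] {X : ℕ → Ω → β}

/-- Unlike `Filtration.natural`, time `k` only sees `X 0, …, X (k - 1)`. -/
def Filtration.past (X : ℕ → Ω → β) (hX : ∀ i, Measurable (X i)) : Filtration ℕ mΩ where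
  seq k := ⨆ i ∈ Set.Iio k, mβ.comap (X i)
  mono' _ _ hkl := biSup_mono fun _ hi => lt_of_lt_of_le hi hkl
  le' _ := iSup₂_le fun i _ => (hX i).comap_le

lemma Filtration.measurable_past (hX : ∀ i, Measurable (X i)) {i k : ℕ} (hik : i < k) :
    Measurable[Filtration.past X hX k] (X i) :=
  Measurable.of_comap_le (le_biSup (fun j => mβ.comap (X j)) (Set.mem_Iio.mpr hik))

end Past

variable {Ω : Type*} {mΩ : MeasurableSpace Ω} {μ : Measure Ω} [IsFiniteMeasure μ]
  {𝒢 : Filtration ℕ mΩ} {f : ℕ → Ω → ℝ}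

theorem Martingale.mul_measureReal_exists_le_le (hf : Martingale f 𝒢 μ) (hnonneg : 0 ≤ f)
    (ε : ℝ≥0) : ε * μ.real {ω | ∃ k, (ε : ℝ) ≤ f k ω} ≤ μ[f 0] := by
  set S : ℕ → Set Ω := fun n =>
    {ω | (ε : ℝ) ≤ (Finset.range (n + 1)).sup' Finset.nonempty_range_add_one fun k => f k ω}
  have hS_mono : Monotone S := fun m n hmn ω hω => by
    simp only [S, Set.mem_ofPred_eq, Finset.le_sup'_iff, Finset.mem_range] at hω ⊢
    obtain ⟨k, hk, hεk⟩ := hω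
    exact ⟨k, by omega, hεk⟩
  have hS_iUnion : ⋃ n, S n = {ω | ∃ k, (ε : ℝ) ≤ f k ω} := by
    ext ω
    simp only [S, Set.mem_iUnion, Set.mem_ofPred_eq, Finset.le_sup'_iff, Finset.mem_range]
    exact ⟨fun ⟨_, k, _, hk⟩ => ⟨k, hk⟩, fun ⟨k, hk⟩ => ⟨k, k, k.lt_succ_self, hk⟩⟩
  have hS_le : ∀ n, (ε : ℝ≥0∞) * μ (S n) ≤ ENNReal.ofReal (μ[f 0]) := fun n =>
    (maximal_ineq hf.submartingale hnonneg n).trans <| ENNReal.ofReal_le_ofReal <|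
      (setIntegral_le_integral (hf.integrable n) (Filter.Eventually.of_forall (hnonneg n))).trans
        (by rw [← setIntegral_univ, ← setIntegral_univ (f := f 0),
          hf.setIntegral_eq (Nat.zero_le n) MeasurableSet.univ])
  have h : (ε : ℝ≥0∞) * μ {ω | ∃ k, (ε : ℝ) ≤ f k ω} ≤ ENNReal.ofReal (μ[f 0]) := by
    rw [← hS_iUnion, hS_mono.measure_iUnion, ENNReal.mul_iSup]
    exact iSup_le hS_le
  have h' := ENNReal.toReal_mono ENNReal.ofReal_ne_top h
  rwa [ENNReal.toReal_mul, ENNReal.toReal_ofReal (integral_nonneg (hnonneg 0))] at h'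

end MeasureTheory

namespace ProbabilityTheory

variable {Ω β : Type*} {mΩ : MeasurableSpace Ω} [mβ : MeasurableSpace β] {μ : Measure Ω}
  {X : ℕ → Ω → β}

lemma iIndepFun.indep_past (hind : iIndepFun X μ) (hX : ∀ i, Measurable (X i)) (k : ℕ) :
    Indep (Filtration.past X hX k) (mβ.comap (X k)) μ := by
  have := indep_iSup_of_disjoint (fun i => (hX i).comap_le) hind.iIndep
    (Set.disjoint_singleton_right.mpr (lt_irrefl k) : Disjoint (Set.Iio k) {k})
  rwa [_root_.iSup_singleton] at this

variable [IsProbabilityMeasure μ]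

theorem iIndepFun.martingale_prod_comp (hind : iIndepFun X μ) (hX : ∀ i, Measurable (X i))
    {g : β → ℝ} (hg : Measurable g) (hg1 : ∀ i, ∫ ω, g (X i ω) ∂μ = 1) :
    Martingale (fun k ω => ∏ i ∈ Finset.range k, g (X i ω)) (Filtration.past X hX) μ := by
  set Z : ℕ → Ω → ℝ := fun k ω => ∏ i ∈ Finset.range k, g (X i ω)
  have hZ_succ : ∀ k, Z (k + 1) = Z k * fun ω => g (X k ω) := fun k => by
    funext ω; exact Finset.prod_range_succ _ _
  have hZm : ∀ k, StronglyMeasurable[Filtration.past X hX k] (Z k) := fun k =>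
    (Finset.measurable_prod _ fun i hi =>
      hg.comp (Filtration.measurable_past hX (Finset.mem_range.mp hi))).stronglyMeasurable
  have hindep : ∀ k {h : Ω → ℝ}, StronglyMeasurable[Filtration.past X hX k] h →
      IndepFun h (fun ω => g (X k ω)) μ := fun k h hh => by
    rw [IndepFun_iff_Indep]
    exact indep_of_indep_of_le_right (indep_of_indep_of_le_left (hind.indep_past hX k)
      hh.measurable.comap_le) (hg.comp (comap_measurable (X k))).comap_le
  have hgX : ∀ k, AEStronglyMeasurable (fun ω => g (X k ω)) μ := fun k =>
    (hg.comp (hX k)).aestronglyMeasurable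
  have hint : ∀ k, Integrable (Z k) μ := fun k => by
    induction k with
    | zero => simp [Z]
    | succ k ih =>
      rw [hZ_succ]
      exact (hindep k (hZm k)).integrable_mul ih
        (Integrable.of_integral_ne_zero (by simp [hg1]))
  refine martingale_of_setIntegral_eq_succ (fun k => hZm k) hint fun k s hs => ?_
  have hs' := (Filtration.past X hX).le k s hs
  have hZs := (hZm k).indicator hs
  calc ∫ ω in s, Z k ω ∂μ = (∫ ω, s.indicator (Z k) ω ∂μ) * ∫ ω, g (X k ω) ∂μ := by
        rw [hg1, mul_one, integral_indicator hs']
    _ = ∫ ω, s.indicator (Z k) ω * g (X k ω) ∂μ :=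
        ((hindep k hZs).integral_fun_mul_eq_mul_integral
          (hZs.mono ((Filtration.past X hX).le k)).aestronglyMeasurable (hgX k)).symm
    _ = ∫ ω in s, Z (k + 1) ω ∂μ := by
        rw [← integral_indicator hs', hZ_succ]
        congr 1 with ω
        by_cases hω : ω ∈ s <;> simp [hω]

end ProbabilityTheory

lemma one_add_exp_div_two_le (t : ℝ) : (1 + exp t) / 2 ≤ exp (t / 2 + t ^ 2 / 8) := by
  have hsq : exp (t / 2) * exp (t / 2) = exp t := by rw [← exp_add]; ring_nf
  have hinv : exp (t / 2) * exp (-(t / 2)) = 1 := by rw [← exp_add]; simp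
  have hcosh : (1 + exp t) / 2 = exp (t / 2) * cosh (t / 2) := by
    rw [cosh_eq]
    linear_combination (-hsq - hinv) / 2
  rw [hcosh, exp_add]
  gcongr
  calc cosh (t / 2) ≤ exp ((t / 2) ^ 2 / 2) := cosh_le_exp_half_sq _
    _ = exp (t ^ 2 / 8) := by ring_nf

lemma four_mul_abs_two_mul_sub_mul_le {a n s : ℝ} (hn : 0 < n) (hs : 0 ≤ s) :
    4 * |2 * a - n| * s
      ≤ 8 * (max (a / n) (1 / 2) + s - 1 / 2) * ((max (a / n) (1 / 2) + s) * n - a) := by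
  have hsn : 0 ≤ s * s * n := by positivity
  rcases le_total (a / n) (1 / 2) with h | h
  · have ha : 2 * a - n ≤ 0 := by linarith [(div_le_iff₀ hn).1 h]
    rw [max_eq_right h, abs_of_nonpos ha]
    nlinarith
  · have ha : 0 ≤ 2 * a - n := by linarith [(le_div_iff₀ hn).1 h]
    rw [max_eq_left h, abs_of_nonneg ha, add_mul, div_mul_cancel₀ a hn.ne']
    have : a / n * (s * n) = a * s := by field_simp
    nlinarith

theorem integral_le_inv_of_measureReal_lt_le_exp {Ω : Type*} [MeasurableSpace Ω] {μ : Measure Ω}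
    {Y : Ω → ℝ} (hY : Integrable Y μ) (hY0 : 0 ≤ Y) {c : ℝ} (hc : 0 < c)
    (htail : ∀ s > 0, μ.real {ω | s < Y ω} ≤ exp (-(c * s))) :
    ∫ ω, Y ω ∂μ ≤ c⁻¹ := by
  rw [hY.integral_eq_integral_meas_lt (Filter.Eventually.of_forall hY0)]
  calc ∫ s in Set.Ioi 0, μ.real {ω | s < Y ω}
      ≤ ∫ s in Set.Ioi 0, exp (-c * s) :=
        integral_mono_of_nonneg (Filter.Eventually.of_forall fun _ => measureReal_nonneg)
          (integrableOn_exp_mul_Ioi (neg_neg_of_pos hc) 0) <| by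
            filter_upwards [ae_restrict_mem measurableSet_Ioi] with s hs
            simpa using htail s hs
    _ = c⁻¹ := by
        rw [integral_exp_mul_Ioi (neg_neg_of_pos hc) 0]
        simp

section HeadsProp

variable {Ω : Type*} {X : ℕ → Ω → ℝ}

lemma headsProp_nonneg (hX : ∀ i ω, X i ω ∈ Set.Icc (0 : ℝ) 1) (a n k : ℕ) (ω : Ω) :
    0 ≤ headsProp X a n k ω :=
  div_nonneg (add_nonneg (Nat.cast_nonneg a) (Finset.sum_nonneg fun i _ => (hX i ω).1))
    (by positivity)

lemma headsProp_le_add_one (hX : ∀ i ω, X i ω ∈ Set.Icc (0 : ℝ) 1) (a n k : ℕ) (ω : Ω) :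
    headsProp X a n k ω ≤ a + 1 := by
  rcases Nat.eq_zero_or_pos (n + k) with h | h
  · have h' : (n : ℝ) + k = 0 := by exact_mod_cast h
    rw [headsProp, h', div_zero]
    positivity
  · have hden : (1 : ℝ) ≤ n + k := by exact_mod_cast h
    have hsum : ∑ i ∈ Finset.range k, X i ω ≤ k := by
      simpa using Finset.sum_le_sum fun i (_ : i ∈ Finset.range k) => (hX i ω).2
    rw [headsProp, div_le_iff₀ (by linarith)]
    nlinarith [(Nat.cast_nonneg a : (0 : ℝ) ≤ a)]

end HeadsProp

section FairCoin

variable {Ω : Type*} [MeasurableSpace Ω] {μ : Measure Ω} {X : ℕ → Ω → ℝ}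

lemma IsFairCoinSeq.mem_Icc (hX : IsFairCoinSeq μ X) (i : ℕ) (ω : Ω) : X i ω ∈ Set.Icc 0 1 := by
  rcases hX.2.1 i ω with h | h <;> simp [h]

variable [IsProbabilityMeasure μ]

lemma IsFairCoinSeq.integral_comp (hX : IsFairCoinSeq μ X) (φ : ℝ → ℝ) (i : ℕ) :
    ∫ ω, φ (X i ω) ∂μ = (φ 0 + φ 1) / 2 := by
  obtain ⟨hXm, h01, hhalf, -⟩ := hX
  have hheads : MeasurableSet {ω | X i ω = 1} := hXm i (measurableSet_singleton 1)
  have hφ : (fun ω => φ (X i ω))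
      = fun ω => φ 0 + (φ 1 - φ 0) * {ω | X i ω = 1}.indicator 1 ω := by
    funext ω
    rcases h01 i ω with h | h <;> simp [h]
  rw [hφ, integral_add (integrable_const _) (((integrable_const 1).indicator hheads).const_mul _),
    integral_const, probReal_univ, one_smul, integral_const_mul, integral_indicator_one hheads,
    measureReal_def, hhalf, ENNReal.toReal_div, ENNReal.toReal_one, ENNReal.toReal_ofNat]
  ring

theorem IsFairCoinSeq.measureReal_exists_lt_headsProp_le (hX : IsFairCoinSeq μ X) (a n : ℕ)
    {r : ℝ} (hr : 1 / 2 < r) :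
    μ.real {ω | ∃ k, r < headsProp X a n k ω} ≤ exp (-(8 * (r - 1 / 2) * (r * n - a))) := by
  set t := 8 * (r - 1 / 2)
  set c := 2 / (1 + exp t)
  set q := exp (t * (r * n - a))
  have hc : 0 < c := by positivity
  have hq : 0 < q := exp_pos _
  have hg1 : ∀ i, ∫ ω, c * exp (t * X i ω) ∂μ = 1 := fun i => by
    rw [hX.integral_comp (fun x => c * exp (t * x))]
    simp only [c, mul_zero, mul_one, exp_zero]
    field_simp
  have hct : 1 ≤ c * exp (t * r) := by
    have := one_add_exp_div_two_le t
    rw [show t / 2 + t ^ 2 / 8 = t * r by ring] at this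
    rw [div_mul_eq_mul_div, le_div_iff₀ (by positivity)]
    linarith
  have hhit : ∀ k ω, r < headsProp X a n k ω → q ≤ ∏ i ∈ Finset.range k, c * exp (t * X i ω) := by
    intro k ω hk
    have hden : 0 < (n : ℝ) + k := by
      by_contra! h
      have : headsProp X a n k ω = 0 := by
        rw [headsProp, le_antisymm h (by positivity), div_zero]
      linarith
    rw [headsProp, lt_div_iff₀ hden] at hk
    rw [Finset.prod_mul_distrib, Finset.prod_const, Finset.card_range, ← exp_sum,
      ← Finset.mul_sum]
    calc q ≤ q * (c * exp (t * r)) ^ k := le_mul_of_one_le_right hq.le (one_le_pow₀ hct)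
      _ = c ^ k * exp (t * (r * (n + k) - a)) := by
        rw [mul_pow, ← exp_nat_mul, mul_left_comm, ← exp_add]
        ring_nf
      _ ≤ c ^ k * exp (t * ∑ i ∈ Finset.range k, X i ω) := by
        gcongr
        linarith
  have hville := (hX.2.2.2.martingale_prod_comp hX.1 (g := fun x => c * exp (t * x))
    (by fun_prop) hg1).mul_measureReal_exists_le_le
    (fun k ω => Finset.prod_nonneg fun i _ => (mul_pos hc (exp_pos _)).le) q.toNNReal
  simp only [Real.coe_toNNReal _ hq.le, Finset.range_zero, Finset.prod_empty, integral_const,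
    smul_eq_mul, mul_one, probReal_univ] at hville
  calc μ.real {ω | ∃ k, r < headsProp X a n k ω}
      ≤ μ.real {ω | ∃ k, q ≤ ∏ i ∈ Finset.range k, c * exp (t * X i ω)} :=
        measureReal_mono fun ω ⟨k, hk⟩ => ⟨k, hhit k ω hk⟩
    _ ≤ 1 / q := by rw [le_div_iff₀ hq]; linarith
    _ = exp (-(t * (r * n - a))) := by rw [exp_neg, one_div]

lemma IsFairCoinSeq.integrable_iSup_headsProp (hX : IsFairCoinSeq μ X) (a n : ℕ) :
    Integrable (fun ω => ⨆ k, headsProp X a n k ω) μ := by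
  have hmeas : Measurable fun ω => ⨆ k, headsProp X a n k ω :=
    Measurable.iSup fun k => by unfold headsProp; have := hX.1; fun_prop
  refine Integrable.of_bound hmeas.aestronglyMeasurable (a + 1) (Filter.Eventually.of_forall
    fun ω => ?_)
  rw [Real.norm_of_nonneg (Real.iSup_nonneg fun k => headsProp_nonneg hX.mem_Icc a n k ω)]
  exact ciSup_le fun k => headsProp_le_add_one hX.mem_Icc a n k ω

theorem IsFairCoinSeq.measureReal_lt_iSup_headsProp_le (hX : IsFairCoinSeq μ X) {a n : ℕ}
    (hn : 0 < n) {s : ℝ} (hs : 0 < s) :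
    μ.real {ω | max ((a : ℝ) / n) (1 / 2) + s < ⨆ k, headsProp X a n k ω}
      ≤ exp (-(4 * |2 * (a : ℝ) - n| * s)) := by
  set r := max ((a : ℝ) / n) (1 / 2) + s
  have hr : 1 / 2 < r := by linarith [le_max_right ((a : ℝ) / n) (1 / 2)]
  calc μ.real {ω | r < ⨆ k, headsProp X a n k ω}
      ≤ μ.real {ω | ∃ k, r < headsProp X a n k ω} :=
        measureReal_mono fun ω hω => exists_lt_of_lt_ciSup hω
    _ ≤ exp (-(8 * (r - 1 / 2) * (r * n - a))) := hX.measureReal_exists_lt_headsProp_le a n hr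
    _ ≤ exp (-(4 * |2 * (a : ℝ) - n| * s)) :=
        exp_le_exp.2 (neg_le_neg (four_mul_abs_two_mul_sub_mul_le (Nat.cast_pos.2 hn) hs.le))

end FairCoin

theorem clairvoyant_le_add_inv_diff_general {Ω : Type*} [MeasurableSpace Ω] (μ : Measure Ω)
    [IsProbabilityMeasure μ] (X : ℕ → Ω → ℝ) (hX : IsFairCoinSeq μ X)
    (a n : ℕ) (hn : 1 ≤ n) (hd : 2 * a ≠ n) :
    clairvoyantValue μ X a n ≤
      max ((a : ℝ) / n) (1 / 2) + 1 / (2 * |2 * (a : ℝ) - n|) := by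
  set r₀ := max ((a : ℝ) / n) (1 / 2)
  set D := |2 * (a : ℝ) - n|
  set M := fun ω => ⨆ k, headsProp X a n k ω
  have hD : 0 < D := abs_pos.2 (sub_ne_zero.2 (by exact_mod_cast hd))
  have hM : Integrable M μ := hX.integrable_iSup_headsProp a n
  have hexcess_int : Integrable (fun ω => max (M ω - r₀) 0) μ :=
    (hM.sub (integrable_const r₀)).pos_part
  have hexcess : ∫ ω, max (M ω - r₀) 0 ∂μ ≤ (4 * D)⁻¹ := by
    refine integral_le_inv_of_measureReal_lt_le_exp hexcess_int (fun ω => le_max_right _ _)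
      (by positivity) fun s hs => ?_
    have hset : {ω | s < max (M ω - r₀) 0} = {ω | r₀ + s < M ω} := by
      ext ω
      simp [hs.not_gt, lt_sub_iff_add_lt']
    rw [hset]
    exact hX.measureReal_lt_iSup_headsProp_le (a := a) hn hs
  calc clairvoyantValue μ X a n ≤ ∫ ω, (r₀ + max (M ω - r₀) 0) ∂μ :=
        integral_mono hM ((integrable_const r₀).add hexcess_int)
          fun ω => by linarith [le_max_left (M ω - r₀) 0]
    _ = r₀ + ∫ ω, max (M ω - r₀) 0 ∂μ := by
        rw [integral_add (integrable_const r₀) hexcess_int, integral_const, probReal_univ,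
          one_smul]
    _ ≤ r₀ + 1 / (2 * D) := by
        have : (4 * D)⁻¹ ≤ 1 / (2 * D) := by
          rw [one_div]
          exact inv_anti₀ (by positivity) (by linarith)
        linarith

/-- For every position `(a,n)` with `2a ≠ n`,
`Ṽ(a,n) ≤ max(a/n, 1/2) + 1/(2·|2a − n|)`. -/
theorem clairvoyant_le_add_inv_diff {Ω : Type*} [MeasurableSpace Ω] (μ : Measure Ω)
    [IsProbabilityMeasure μ] (X : ℕ → Ω → ℝ) (hX : IsFairCoinSeq μ X)
    (a n : ℕ) (hn : 1 ≤ n) (han : a ≤ n) (hd : 2 * a ≠ n) :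
    clairvoyantValue μ X a n ≤
      max ((a : ℝ) / n) (1 / 2) + 1 / (2 * |2 * (a : ℝ) - n|) :=
  clairvoyant_le_add_inv_diff_general μ X hX a n hn hd
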